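/- arXiv:1907.06158 — 5 statements merged into one kernel-verified Lean document; each statement's English description precedes it below -/
import Mathlib

section
/- For every real α > 2, every real m > 0, and every real c > 0, the improper integral ∫₀^∞ (1 − (t^{α/2}/(t^{α/2} + c))^m) dt converges and equals c^{2/α} · Γ(m + 2/α) · Γ(1 − 2/α) / Γ(m). -/
/-!
Write the integrand as `1 - w(t)^m` with `w(t) = t^s / (t^s + c)` and `s = α/2`. Since
`1 - w^m = ∫_w^1 m y^(m-1) dy`, Tonelli turns the integral into
`∫_0^1 m y^(m-1) |{t > 0 : w(t) < y}| dy`. As `w` increases from `0` to `1`, this level set is the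
interval `(0, (c y / (1 - y))^(1/s))`, so the integral is `m c^(1/s) B(m + 1/s, 1 - 1/s)`, and
`m Γ(m) = Γ(m + 1)` gives the stated form.
-/

open MeasureTheory Set Real
open scoped ENNReal

lemma lintegral_Ioo_rpow_mul_one_sub_rpow_eq_beta {a b : ℝ} (ha : 0 < a) (hb : 0 < b) :
    ∫⁻ y in Ioo 0 1, ENNReal.ofReal (y ^ (a - 1) * (1 - y) ^ (b - 1))
      = ENNReal.ofReal (ProbabilityTheory.beta a b) := by
  have hB := ProbabilityTheory.beta_pos ha hb
  have hpdf := ProbabilityTheory.lintegral_betaPDF_eq_one ha hb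
  rw [ProbabilityTheory.lintegral_betaPDF] at hpdf
  calc ∫⁻ y in Ioo 0 1, ENNReal.ofReal (y ^ (a - 1) * (1 - y) ^ (b - 1))
      = ∫⁻ y in Ioo 0 1, ENNReal.ofReal (ProbabilityTheory.beta a b) *
          ENNReal.ofReal (1 / ProbabilityTheory.beta a b * y ^ (a - 1) * (1 - y) ^ (b - 1)) := by
        refine setLIntegral_congr_fun measurableSet_Ioo fun y _ => ?_
        rw [← ENNReal.ofReal_mul hB.le]
        congr 1
        field_simp
    _ = ENNReal.ofReal (ProbabilityTheory.beta a b) := by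
        rw [lintegral_const_mul _ (by fun_prop), hpdf, mul_one]

lemma lintegral_Ioo_mul_rpow_sub_one {m w : ℝ} (hm : 0 < m) (hw0 : 0 ≤ w) (hw1 : w ≤ 1) :
    ∫⁻ y in Ioo w 1, ENNReal.ofReal (m * y ^ (m - 1)) = ENNReal.ofReal (1 - w ^ m) := by
  have hint : IntervalIntegrable (fun y : ℝ => m * y ^ (m - 1)) volume w 1 :=
    (intervalIntegral.intervalIntegrable_rpow' (by linarith)).const_mul m
  rw [← ofReal_integral_eq_lintegral_ofReal
      (hint.1.mono_set Ioo_subset_Ioc_self)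
      (ae_restrict_of_forall_mem measurableSet_Ioo fun y hy =>
        mul_nonneg hm.le (rpow_nonneg (hw0.trans hy.1.le) _)),
    ← integral_Ioc_eq_integral_Ioo, ← intervalIntegral.integral_of_le hw1,
    intervalIntegral.integral_const_mul, integral_rpow (Or.inl (by linarith)),
    sub_add_cancel, one_rpow]
  field_simp

lemma lintegral_ofReal_one_sub_rpow {X : Type*} [MeasurableSpace X] {μ : Measure X} [SFinite μ]
    {m : ℝ} (hm : 0 < m) {w : X → ℝ} (hw : Measurable w) (hw01 : ∀ᵐ x ∂μ, w x ∈ Icc 0 1) :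
    ∫⁻ x, ENNReal.ofReal (1 - w x ^ m) ∂μ
      = ∫⁻ y in Ioo 0 1, ENNReal.ofReal (m * y ^ (m - 1)) * μ {x | w x < y} := by
  set g : ℝ → ℝ≥0∞ := fun y => ENNReal.ofReal (m * y ^ (m - 1))
  have hslice : ∀ᵐ x ∂μ,
      ENNReal.ofReal (1 - w x ^ m) = ∫⁻ y in Ioo 0 1, (Ioi (w x)).indicator g y := by
    filter_upwards [hw01] with x ⟨hw0, hw1⟩
    rw [lintegral_indicator measurableSet_Ioi, Measure.restrict_restrict measurableSet_Ioi,
      Ioi_inter_Ioo, max_eq_left hw0, lintegral_Ioo_mul_rpow_sub_one hm hw0 hw1]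
  have hmeas : Measurable (Function.uncurry fun x y => (Ioi (w x)).indicator g y) :=
    Measurable.ite (measurableSet_lt (hw.comp measurable_fst) measurable_snd) (by fun_prop)
      measurable_const
  calc ∫⁻ x, ENNReal.ofReal (1 - w x ^ m) ∂μ
      = ∫⁻ x, (∫⁻ y in Ioo 0 1, (Ioi (w x)).indicator g y) ∂μ := lintegral_congr_ae hslice
    _ = ∫⁻ y in Ioo 0 1, ∫⁻ x, (Ioi (w x)).indicator g y ∂μ :=
        lintegral_lintegral_swap hmeas.aemeasurable
    _ = ∫⁻ y in Ioo 0 1, g y * μ {x | w x < y} :=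
        lintegral_congr fun y => lintegral_indicator_const (measurableSet_lt hw measurable_const) _

lemma rpow_div_rpow_add_mem_Icc {s c t : ℝ} (hc : 0 ≤ c) (ht : 0 ≤ t) :
    t ^ s / (t ^ s + c) ∈ Icc 0 1 := by
  have hts : 0 ≤ t ^ s := rpow_nonneg ht s
  exact ⟨by positivity, div_le_one_of_le₀ (le_add_of_nonneg_right hc) (by positivity)⟩

lemma volume_restrict_Ioi_rpow_div_rpow_add_lt {s c y : ℝ} (hs : 0 < s) (hc : 0 < c)
    (hy : y ∈ Ioo 0 1) :
    volume.restrict (Ioi 0) {t : ℝ | t ^ s / (t ^ s + c) < y}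
      = ENNReal.ofReal ((c * y / (1 - y)) ^ s⁻¹) := by
  have h1y : 0 < 1 - y := sub_pos.mpr hy.2
  have hlevel : {t : ℝ | t ^ s / (t ^ s + c) < y} ∩ Ioi 0 = Ioo 0 ((c * y / (1 - y)) ^ s⁻¹) := by
    ext t
    simp only [mem_inter_iff, mem_ofPred_eq, mem_Ioi, mem_Ioo]
    refine and_comm.trans (and_congr_right fun ht => ?_)
    have hts : 0 < t ^ s := rpow_pos_of_pos ht s
    rw [lt_rpow_inv_iff_of_pos ht.le (div_pos (mul_pos hc hy.1) h1y).le hs,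
      div_lt_iff₀ (by positivity), lt_div_iff₀ h1y]
    constructor <;> intro h <;> nlinarith
  rw [Measure.restrict_apply (measurableSet_lt (by fun_prop) measurable_const), hlevel,
    volume_Ioo, sub_zero]

lemma lintegral_Ioi_ofReal_one_sub_rpow_div_rpow_add {s m c : ℝ} (hs : 1 < s) (hm : 0 < m)
    (hc : 0 < c) :
    ∫⁻ t in Ioi 0, ENNReal.ofReal (1 - (t ^ s / (t ^ s + c)) ^ m)
      = ENNReal.ofReal (c ^ s⁻¹ * Gamma (m + s⁻¹) * Gamma (1 - s⁻¹) / Gamma m) := by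
  set p := s⁻¹
  have hp0 : 0 < p := by positivity
  have hp1 : p < 1 := inv_lt_one_of_one_lt₀ hs
  have hw01 : ∀ᵐ t ∂volume.restrict (Ioi 0), t ^ s / (t ^ s + c) ∈ Icc 0 1 :=
    ae_restrict_of_forall_mem measurableSet_Ioi fun t ht =>
      rpow_div_rpow_add_mem_Icc hc.le (le_of_lt ht)
  calc ∫⁻ t in Ioi 0, ENNReal.ofReal (1 - (t ^ s / (t ^ s + c)) ^ m)
      = ∫⁻ y in Ioo 0 1,
          ENNReal.ofReal (m * y ^ (m - 1)) * ENNReal.ofReal ((c * y / (1 - y)) ^ p) := by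
        rw [lintegral_ofReal_one_sub_rpow hm (by fun_prop) hw01]
        refine setLIntegral_congr_fun measurableSet_Ioo fun y hy => ?_
        rw [volume_restrict_Ioi_rpow_div_rpow_add_lt (by linarith) hc hy]
    _ = ∫⁻ y in Ioo 0 1, ENNReal.ofReal (m * c ^ p) *
          ENNReal.ofReal (y ^ ((m + p) - 1) * (1 - y) ^ ((1 - p) - 1)) := by
        refine setLIntegral_congr_fun measurableSet_Ioo fun y ⟨hy0, hy1⟩ => ?_
        have h1y : 0 < 1 - y := sub_pos.mpr hy1
        rw [← ENNReal.ofReal_mul (by positivity), ← ENNReal.ofReal_mul (by positivity)]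
        congr 1
        rw [div_rpow (by positivity) h1y.le, mul_rpow hc.le hy0.le,
          show m + p - 1 = (m - 1) + p by ring, rpow_add hy0, show 1 - p - 1 = -p by ring,
          rpow_neg h1y.le]
        field_simp
    _ = ENNReal.ofReal (c ^ p * Gamma (m + p) * Gamma (1 - p) / Gamma m) := by
        rw [lintegral_const_mul _ (by fun_prop),
          lintegral_Ioo_rpow_mul_one_sub_rpow_eq_beta (by positivity) (by linarith),
          ← ENNReal.ofReal_mul (by positivity), ProbabilityTheory.beta,
          add_add_sub_cancel, Gamma_add_one hm.ne']
        congr 1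
        field_simp

lemma integrable_and_integral_eq_of_lintegral_ofReal_eq {X : Type*} [MeasurableSpace X]
    {μ : Measure X} {f : X → ℝ} (hf : AEStronglyMeasurable f μ) (hf0 : 0 ≤ᵐ[μ] f) {r : ℝ}
    (hr : 0 ≤ r) (h : ∫⁻ x, ENNReal.ofReal (f x) ∂μ = ENNReal.ofReal r) :
    Integrable f μ ∧ ∫ x, f x ∂μ = r :=
  ⟨⟨hf, (hasFiniteIntegral_iff_ofReal hf0).mpr (h ▸ ENNReal.ofReal_lt_top)⟩, by
    rw [integral_eq_lintegral_of_nonneg_ae hf0 hf, h, ENNReal.toReal_ofReal hr]⟩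

/-- For every real `α > 2`, `m > 0`, `c > 0`, the improper integral
`∫₀^∞ (1 − (t^{α/2}/(t^{α/2}+c))^m) dt` converges and equals
`c^{2/α} Γ(m + 2/α) Γ(1 − 2/α) / Γ(m)`. -/
theorem stmt_0 (α m c : ℝ) (hα : 2 < α) (hm : 0 < m) (hc : 0 < c) :
    IntegrableOn (fun t : ℝ => 1 - (t ^ (α / 2) / (t ^ (α / 2) + c)) ^ m) (Ioi 0) ∧
    ∫ t in Ioi (0 : ℝ), (1 - (t ^ (α / 2) / (t ^ (α / 2) + c)) ^ m)
      = c ^ (2 / α) * Real.Gamma (m + 2 / α) * Real.Gamma (1 - 2 / α) / Real.Gamma m := by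
  have h := lintegral_Ioi_ofReal_one_sub_rpow_div_rpow_add (by linarith : 1 < α / 2) hm hc
  rw [inv_div] at h
  have hnonneg : ∀ t ∈ Ioi (0 : ℝ), 0 ≤ 1 - (t ^ (α / 2) / (t ^ (α / 2) + c)) ^ m :=
    fun t ht => by
      obtain ⟨hw0, hw1⟩ := rpow_div_rpow_add_mem_Icc (s := α / 2) hc.le (le_of_lt ht)
      exact sub_nonneg.mpr (rpow_le_one hw0 hw1 hm.le)
  have h2α : 0 < 1 - 2 / α := by
    rw [sub_pos, div_lt_one (by linarith)]
    exact hα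
  exact integrable_and_integral_eq_of_lintegral_ofReal_eq
    (Measurable.aestronglyMeasurable (by fun_prop))
    (ae_restrict_of_forall_mem measurableSet_Ioi hnonneg) (by positivity) h
end

section
/- Let α > 2 and s > 0 be real numbers, and let μ be a probability measure on [0,∞) such that ∫ h^{2/α} dμ(h) < ∞. Then ∫₀^∞ (1 − ∫ e^{−s·h·r^{−α/2}} dμ(h)) dr = s^{2/α} · (∫ h^{2/α} dμ(h)) · Γ(1 − 2/α). -/
/-!
For a fixed fading gain `h`, the inner integral `∫₀^∞ (1 - exp (-c r^{-β})) dr` with `c = s h`,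
`β = α/2 > 1`, is computed by integrating by parts against `r` (the boundary terms vanish since
`1 - exp (-x) ≤ min 1 x`), which leaves `c β ∫₀^∞ r^{-β} exp (-c r^{-β}) dr`; the substitution
`x = r^{-β}` turns this into a Gamma integral, giving `c^{1/β} Γ(1 - 1/β)`. Since this is
`s^{1/β} Γ(1 - 1/β) h^{1/β}`, the moment assumption makes the double integral absolutely convergent,
and Fubini exchanges the `r`- and `h`-integrals.
-/

open MeasureTheory Set Real Filter Topology

lemma one_sub_exp_neg_nonneg {x : ℝ} (hx : 0 ≤ x) : 0 ≤ 1 - exp (-x) := by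
  linarith [exp_le_one_iff.mpr (neg_nonpos.mpr hx)]

lemma one_sub_exp_neg_le_self (x : ℝ) : 1 - exp (-x) ≤ x := by
  linarith [one_sub_le_exp_neg x]

lemma one_sub_integral_eq_integral_one_sub {Ω : Type*} [MeasurableSpace Ω] {μ : Measure Ω}
    [IsProbabilityMeasure μ] {f : Ω → ℝ} (hf : Integrable f μ) :
    1 - ∫ x, f x ∂μ = ∫ x, (1 - f x) ∂μ := by
  rw [integral_sub (integrable_const 1) hf, integral_const, probReal_univ, one_smul]

section OneSubExpNegMulRpowNeg

variable {β c : ℝ}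

lemma integrableOn_one_sub_exp_neg_mul_rpow_neg (hβ : 1 < β) (hc : 0 ≤ c) :
    IntegrableOn (fun r : ℝ => 1 - exp (-(c * r ^ (-β)))) (Ioi 0) := by
  have hmeas : AEStronglyMeasurable (fun r : ℝ => 1 - exp (-(c * r ^ (-β)))) :=
    (by fun_prop : Measurable fun r : ℝ => 1 - exp (-(c * r ^ (-β)))).aestronglyMeasurable
  rw [← Ioc_union_Ioi_eq_Ioi zero_le_one]
  refine IntegrableOn.union ?_ ?_
  · refine IntegrableOn.of_bound measure_Ioc_lt_top hmeas.restrict 1 ?_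
    filter_upwards [ae_restrict_mem measurableSet_Ioc] with r hr
    have hx : 0 ≤ c * r ^ (-β) := mul_nonneg hc (rpow_nonneg hr.1.le _)
    rw [norm_of_nonneg (one_sub_exp_neg_nonneg hx)]
    linarith [exp_pos (-(c * r ^ (-β)))]
  · have hdom := (integrableOn_Ioi_rpow_of_lt (by linarith : -β < -1) zero_lt_one).const_mul c
    refine Integrable.mono' hdom hmeas.restrict ?_
    filter_upwards [ae_restrict_mem measurableSet_Ioi] with r (hr : 1 < r)
    have hx : 0 ≤ c * r ^ (-β) := mul_nonneg hc (rpow_nonneg (by linarith) _)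
    rw [norm_of_nonneg (one_sub_exp_neg_nonneg hx)]
    exact one_sub_exp_neg_le_self _

lemma tendsto_one_sub_exp_neg_mul_rpow_neg_mul_self_nhdsGT (hc : 0 ≤ c) :
    Tendsto (fun r : ℝ => (1 - exp (-(c * r ^ (-β)))) * r) (𝓝[>] 0) (𝓝 0) := by
  refine squeeze_zero' ?_ ?_ (tendsto_id.mono_left nhdsWithin_le_nhds)
  all_goals filter_upwards [self_mem_nhdsWithin] with r (hr : 0 < r)
  · exact mul_nonneg (one_sub_exp_neg_nonneg (mul_nonneg hc (rpow_nonneg hr.le _))) hr.le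
  · show _ ≤ r
    nlinarith [exp_pos (-(c * r ^ (-β)))]

lemma tendsto_one_sub_exp_neg_mul_rpow_neg_mul_self_atTop (hβ : 1 < β) (hc : 0 ≤ c) :
    Tendsto (fun r : ℝ => (1 - exp (-(c * r ^ (-β)))) * r) atTop (𝓝 0) := by
  have hbound : Tendsto (fun r : ℝ => c * r ^ (-(β - 1))) atTop (𝓝 0) := by
    simpa using (tendsto_rpow_neg_atTop (by linarith : 0 < β - 1)).const_mul c
  refine squeeze_zero' ?_ ?_ hbound
  all_goals filter_upwards [eventually_gt_atTop 0] with r hr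
  · exact mul_nonneg (one_sub_exp_neg_nonneg (mul_nonneg hc (rpow_nonneg hr.le _))) hr.le
  · calc (1 - exp (-(c * r ^ (-β)))) * r ≤ c * r ^ (-β) * r :=
          mul_le_mul_of_nonneg_right (one_sub_exp_neg_le_self _) hr.le
      _ = c * r ^ (-(β - 1)) := by
          rw [mul_assoc, ← rpow_add_one hr.ne']
          ring_nf

/-- The integrand of `r ^ (-β) * exp (-(c * r ^ (-β)))` after the substitution `r = x ^ (-β⁻¹)`. -/
lemma abs_mul_rpow_smul_rpow_neg_mul_exp_neg (hβ : 0 < β) {x : ℝ} (hx : 0 < x) :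
    (|-β⁻¹| * x ^ (-β⁻¹ - 1)) • ((x ^ (-β⁻¹)) ^ (-β) * exp (-(c * (x ^ (-β⁻¹)) ^ (-β))))
      = β⁻¹ * (x ^ (-β⁻¹) * exp (-(c * x))) := by
  have hxx : (x ^ (-β⁻¹)) ^ (-β) = x := by
    rw [← rpow_mul hx.le, neg_mul_neg, inv_mul_cancel₀ hβ.ne', rpow_one]
  rw [hxx, abs_neg, abs_of_pos (inv_pos.mpr hβ), smul_eq_mul, rpow_sub_one hx.ne']
  field_simp

lemma integrableOn_rpow_neg_mul_exp_neg_mul_rpow_neg (hβ : 1 < β) (hc : 0 < c) :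
    IntegrableOn (fun r : ℝ => r ^ (-β) * exp (-(c * r ^ (-β)))) (Ioi 0) := by
  have hβ0 : 0 < β := by linarith
  refine (integrableOn_Ioi_comp_rpow_iff _ (neg_ne_zero.mpr (inv_ne_zero hβ0.ne'))).mp ?_
  have hgamma : IntegrableOn (fun x : ℝ => x ^ (-β⁻¹) * exp (-c * x ^ (1 : ℝ))) (Ioi 0) :=
    integrableOn_rpow_mul_exp_neg_mul_rpow (by linarith [inv_lt_one_of_one_lt₀ hβ]) one_pos hc
  refine IntegrableOn.congr_fun (hgamma.const_mul β⁻¹) (fun x (hx : 0 < x) => ?_)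
    measurableSet_Ioi
  rw [abs_mul_rpow_smul_rpow_neg_mul_exp_neg hβ0 hx, rpow_one, neg_mul]

lemma integral_rpow_neg_mul_exp_neg_mul_rpow_neg (hβ : 1 < β) (hc : 0 < c) :
    ∫ r in Ioi 0, r ^ (-β) * exp (-(c * r ^ (-β)))
      = β⁻¹ * ((1 / c) ^ (1 - β⁻¹) * Gamma (1 - β⁻¹)) := by
  have hβ0 : 0 < β := by linarith
  rw [← integral_comp_rpow_Ioi _ (neg_ne_zero.mpr (inv_ne_zero hβ0.ne')),
    ← integral_rpow_mul_exp_neg_mul_Ioi (by linarith [inv_lt_one_of_one_lt₀ hβ]) hc,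
    ← integral_const_mul]
  refine setIntegral_congr_fun measurableSet_Ioi fun x (hx : 0 < x) => ?_
  rw [abs_mul_rpow_smul_rpow_neg_mul_exp_neg hβ0 hx, sub_sub_cancel_left]

lemma hasDerivAt_one_sub_exp_neg_mul_rpow_neg {r : ℝ} (hr : 0 < r) :
    HasDerivAt (fun r : ℝ => 1 - exp (-(c * r ^ (-β))))
      (-(c * β) * (r ^ (-β) * exp (-(c * r ^ (-β)))) / r) r := by
  refine ((((hasDerivAt_rpow_const (p := -β) (Or.inl hr.ne')).const_mul c).neg.exp).const_sub 1
    ).congr_deriv ?_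
  simp only [Pi.neg_apply]
  rw [rpow_sub_one hr.ne']
  ring

theorem integral_one_sub_exp_neg_mul_rpow_neg (hβ : 1 < β) (hc : 0 ≤ c) :
    ∫ r in Ioi 0, (1 - exp (-(c * r ^ (-β)))) = c ^ β⁻¹ * Gamma (1 - β⁻¹) := by
  rcases hc.eq_or_lt with rfl | hc
  · simp [zero_rpow (inv_ne_zero (by linarith : β ≠ 0))]
  have hderiv_mul_self : EqOn (fun r => -(c * β) * (r ^ (-β) * exp (-(c * r ^ (-β)))) / r * r)
      (fun r => -(c * β) * (r ^ (-β) * exp (-(c * r ^ (-β))))) (Ioi 0) :=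
    fun r (hr : 0 < r) => div_mul_cancel₀ _ hr.ne'
  have hparts := integral_Ioi_mul_deriv_eq_deriv_mul
    (fun r hr => hasDerivAt_one_sub_exp_neg_mul_rpow_neg hr) (fun r _ => hasDerivAt_id' r)
    (by simpa [Pi.mul_def] using integrableOn_one_sub_exp_neg_mul_rpow_neg hβ hc.le)
    (IntegrableOn.congr_fun ((integrableOn_rpow_neg_mul_exp_neg_mul_rpow_neg hβ hc).const_mul _)
      hderiv_mul_self.symm measurableSet_Ioi)
    (tendsto_one_sub_exp_neg_mul_rpow_neg_mul_self_nhdsGT hc.le)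
    (tendsto_one_sub_exp_neg_mul_rpow_neg_mul_self_atTop hβ hc.le)
  simp only [mul_one] at hparts
  rw [hparts, setIntegral_congr_fun measurableSet_Ioi hderiv_mul_self, integral_const_mul,
    integral_rpow_neg_mul_exp_neg_mul_rpow_neg hβ hc]
  have hβ0 : β ≠ 0 := by linarith
  have hc_rpow : c * (1 / c) ^ (1 - β⁻¹) = c ^ β⁻¹ := by
    rw [one_div, inv_rpow hc.le, ← rpow_neg hc.le, ← rpow_one_add' hc.le (by simp [hβ0])]
    ring_nf
  rw [← hc_rpow]
  field_simp
  ring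

end OneSubExpNegMulRpowNeg

lemma integrable_prod_one_sub_exp_neg_mul_rpow_neg {β s : ℝ} (hβ : 1 < β) (hs : 0 ≤ s)
    {μ : Measure ℝ} [SFinite μ] (hnn : ∀ᵐ h ∂μ, 0 ≤ h)
    (hmom : Integrable (fun h : ℝ => h ^ β⁻¹) μ) :
    Integrable (Function.uncurry fun h r : ℝ => 1 - exp (-(s * h * r ^ (-β))))
      (μ.prod (volume.restrict (Ioi 0))) := by
  have hmeas : Measurable fun p : ℝ × ℝ => 1 - exp (-(s * p.1 * p.2 ^ (-β))) := by fun_prop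
  refine (integrable_prod_iff hmeas.aestronglyMeasurable).mpr ⟨?_, ?_⟩
  · filter_upwards [hnn] with h hh
    exact integrableOn_one_sub_exp_neg_mul_rpow_neg hβ (mul_nonneg hs hh)
  · refine (hmom.const_mul (s ^ β⁻¹ * Gamma (1 - β⁻¹))).congr ?_
    filter_upwards [hnn] with h hh
    have hnorm : ∀ r ∈ Ioi (0 : ℝ), ‖1 - exp (-(s * h * r ^ (-β)))‖
        = 1 - exp (-(s * h * r ^ (-β))) := fun r (hr : 0 < r) =>
      norm_of_nonneg (one_sub_exp_neg_nonneg (by positivity))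
    rw [setIntegral_congr_fun measurableSet_Ioi hnorm,
      integral_one_sub_exp_neg_mul_rpow_neg hβ (mul_nonneg hs hh), mul_rpow hs hh]
    ring

/-- Let `α > 2` and `s > 0` be real numbers, and let `μ` be a probability measure on `[0,∞)`
(formalized as a probability measure on `ℝ` giving a.e. nonnegative values) such that
`∫ h^{2/α} dμ(h) < ∞`. Then
`∫₀^∞ (1 − ∫ e^{−s h r^{−α/2}} dμ(h)) dr = s^{2/α} (∫ h^{2/α} dμ(h)) Γ(1 − 2/α)`. -/
theorem stmt_1 (α s : ℝ) (hα : 2 < α) (hs : 0 < s)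
    (μ : Measure ℝ) [IsProbabilityMeasure μ]
    (hnn : ∀ᵐ h ∂μ, 0 ≤ h)
    (hmom : Integrable (fun h : ℝ => h ^ (2 / α)) μ) :
    ∫ r in Ioi (0 : ℝ), (1 - ∫ h, Real.exp (-(s * h * r ^ (-(α / 2)))) ∂μ)
      = s ^ (2 / α) * (∫ h, h ^ (2 / α) ∂μ) * Real.Gamma (1 - 2 / α) := by
  rw [show 2 / α = (α / 2)⁻¹ from (inv_div α 2).symm] at hmom ⊢
  have hβ : 1 < α / 2 := by linarith
  set β := α / 2
  have hslice : ∀ r ∈ Ioi (0 : ℝ), 1 - ∫ h, exp (-(s * h * r ^ (-β))) ∂μ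
      = ∫ h, (1 - exp (-(s * h * r ^ (-β)))) ∂μ := fun r (hr : 0 < r) => by
    refine one_sub_integral_eq_integral_one_sub (Integrable.of_bound (by fun_prop) 1 ?_)
    filter_upwards [hnn] with h hh
    rw [norm_of_nonneg (exp_pos _).le, exp_le_one_iff, neg_nonpos]
    positivity
  have hinner : ∀ᵐ h ∂μ, ∫ r in Ioi 0, (1 - exp (-(s * h * r ^ (-β))))
      = s ^ β⁻¹ * Gamma (1 - β⁻¹) * h ^ β⁻¹ := by
    filter_upwards [hnn] with h hh
    rw [integral_one_sub_exp_neg_mul_rpow_neg hβ (mul_nonneg hs.le hh), mul_rpow hs.le hh]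
    ring
  calc ∫ r in Ioi 0, (1 - ∫ h, exp (-(s * h * r ^ (-β))) ∂μ)
      = ∫ r in Ioi 0, ∫ h, (1 - exp (-(s * h * r ^ (-β)))) ∂μ :=
        setIntegral_congr_fun measurableSet_Ioi hslice
    _ = ∫ h, (∫ r in Ioi 0, (1 - exp (-(s * h * r ^ (-β))))) ∂μ :=
        (integral_integral_swap
          (integrable_prod_one_sub_exp_neg_mul_rpow_neg hβ hs.le hnn hmom)).symm
    _ = ∫ h, s ^ β⁻¹ * Gamma (1 - β⁻¹) * h ^ β⁻¹ ∂μ := integral_congr_ae hinner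
    _ = s ^ β⁻¹ * (∫ h, h ^ β⁻¹ ∂μ) * Gamma (1 - β⁻¹) := by
        rw [integral_const_mul]
        ring
end

section
/- For every real n > 0, define η_c(ν) := ∫₀^∞ exp(−(n·Γ(1+ν)·u^{1−ν} + u)) du. Then η_c(0) = 1/(1+n), η_c(1) = e^{−n}, and η_c(1) < η_c(0). -/
open MeasureTheory Set Real

/-- The uplink coverage probability of equation (26) under the proposed uplink power control
with exponent `ν` and normalized load `n`:
`η_c(ν) = ∫₀^∞ exp(−(n Γ(1+ν) u^{1−ν} + u)) du`. -/
noncomputable def etaC (n ν : ℝ) : ℝ :=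
  ∫ u in Ioi (0 : ℝ), Real.exp (-(n * Real.Gamma (1 + ν) * u ^ (1 - ν) + u))

/-- For every real `n > 0`: `η_c(0) = 1/(1+n)`, `η_c(1) = e^{−n}`, and `η_c(1) < η_c(0)`. -/
theorem stmt_12 (n : ℝ) (hn : 0 < n) :
    etaC n 0 = 1 / (1 + n) ∧ etaC n 1 = Real.exp (-n) ∧ etaC n 1 < etaC n 0 := by
  have h1n : (0:ℝ) < 1 + n := by linarith
  have h0 : etaC n 0 = 1 / (1 + n) := by
    unfold etaC
    have hcong : ∀ u ∈ Ioi (0:ℝ),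
        Real.exp (-(n * Real.Gamma (1 + 0) * u ^ (1 - (0:ℝ)) + u))
          = Real.exp (-((1 + n) * u)) := by
      intro u hu
      rw [add_zero, Real.Gamma_one, sub_zero, Real.rpow_one]
      ring_nf
    rw [setIntegral_congr_fun measurableSet_Ioi hcong]
    have := integral_comp_mul_left_Ioi (fun x => Real.exp (-x)) 0 h1n
    simp only [mul_zero, smul_eq_mul] at this
    rw [show (fun x => Real.exp (-((1+n)*x))) = (fun x => Real.exp (-((1+n)*x))) from rfl]
    calc (∫ u in Ioi (0:ℝ), Real.exp (-((1+n) * u)))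
        = (1+n)⁻¹ * ∫ x in Ioi (0:ℝ), Real.exp (-x) := this
      _ = 1 / (1+n) := by rw [integral_exp_neg_Ioi_zero]; ring
  have h1 : etaC n 1 = Real.exp (-n) := by
    unfold etaC
    have hcong : ∀ u ∈ Ioi (0:ℝ),
        Real.exp (-(n * Real.Gamma (1 + 1) * u ^ (1 - (1:ℝ)) + u))
          = Real.exp (-n) * Real.exp (-u) := by
      intro u hu
      rw [sub_self, Real.rpow_zero, ← Real.exp_add]
      norm_num [Real.Gamma_two]; ring
    rw [setIntegral_congr_fun measurableSet_Ioi hcong, integral_const_mul,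
      integral_exp_neg_Ioi_zero, mul_one]
  refine ⟨h0, h1, ?_⟩
  rw [h0, h1]
  rw [div_eq_inv_mul, mul_one, Real.exp_neg]
  exact inv_strictAnti₀ (by positivity) (by linarith [Real.add_one_lt_exp hn.ne'])
end

section
/- Let α > 2, ν > −2/α, Q̄ > 0 and 0 < λ_min ≤ λ_b ≤ λ_max be real numbers, and let X be a random variable with probability density x ↦ π·λ_b·e^{−π·λ_b·x} on (0,∞). Define Q := (Q̄/Γ(1 + αν/2)) · X^{αν/2} · ((π·λ_min)^{αν/2} if ν ≥ 0, and (π·λ_max)^{αν/2} if ν < 0). Then E[Q] = Q̄·(λ_min/λ_b)^{αν/2} if ν ≥ 0 and E[Q] = Q̄·(λ_max/λ_b)^{αν/2} if ν < 0; in both cases E[Q] ≤ Q̄. -/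
open MeasureTheory Set Real

/-- Energy efficiency of the proposed uplink power control (equations (22)–(23)): with `X`
exponentially distributed with rate `π λ_b` (squared distance to the nearest BS, formalized
through its density `x ↦ π λ_b e^{−π λ_b x}` on `(0,∞)`) and transmit power
`Q = (Q̄/Γ(1+αν/2)) X^{αν/2} ((π λ_min)^{αν/2}` if `ν ≥ 0`, `(π λ_max)^{αν/2}` if `ν < 0)`,
the mean power is `E[Q] = Q̄ (λ_min/λ_b)^{αν/2}` if `ν ≥ 0` and `E[Q] = Q̄ (λ_max/λ_b)^{αν/2}`
if `ν < 0`; in both cases `E[Q] ≤ Q̄`. -/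
theorem stmt_15 (α ν Qbar lmin lb lmax : ℝ) (hα : 2 < α) (hν : -2 / α < ν)
    (hQ : 0 < Qbar) (hmin : 0 < lmin) (h1 : lmin ≤ lb) (h2 : lb ≤ lmax) :
    (∫ x in Ioi (0 : ℝ),
        ((Qbar / Real.Gamma (1 + α * ν / 2)) * x ^ (α * ν / 2) *
            (if 0 ≤ ν then (π * lmin) ^ (α * ν / 2) else (π * lmax) ^ (α * ν / 2))) *
          (π * lb * Real.exp (-(π * lb * x))))
      = (if 0 ≤ ν then Qbar * (lmin / lb) ^ (α * ν / 2)
          else Qbar * (lmax / lb) ^ (α * ν / 2)) ∧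
    (∫ x in Ioi (0 : ℝ),
        ((Qbar / Real.Gamma (1 + α * ν / 2)) * x ^ (α * ν / 2) *
            (if 0 ≤ ν then (π * lmin) ^ (α * ν / 2) else (π * lmax) ^ (α * ν / 2))) *
          (π * lb * Real.exp (-(π * lb * x))))
      ≤ Qbar := by
  have hα0 : (0:ℝ) < α := by linarith
  set s := α * ν / 2 with hs
  have hαν : -2 < α * ν := by
    have := (div_lt_iff₀ hα0).mp hν
    nlinarith
  have hs1 : 0 < s + 1 := by
    rw [hs]; linarith
  have hlb : 0 < lb := lt_of_lt_of_le hmin h1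
  have hb : 0 < π * lb := by positivity
  have hΓ : Real.Gamma (1 + s) ≠ 0 := by
    rw [add_comm]; exact (Real.Gamma_pos_of_pos hs1).ne'
  have key : ∀ K : ℝ,
      (∫ x in Ioi (0:ℝ), ((Qbar / Real.Gamma (1 + s)) * x ^ s * K) *
        (π * lb * Real.exp (-(π * lb * x)))) = Qbar * K * (π * lb) ^ (-s) := by
    intro K
    calc (∫ x in Ioi (0:ℝ), ((Qbar / Real.Gamma (1 + s)) * x ^ s * K) *
            (π * lb * Real.exp (-(π * lb * x))))
        = ∫ x in Ioi (0:ℝ), (Qbar / Real.Gamma (1 + s) * K * (π * lb)) *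
            (x ^ (s + 1 - 1) * Real.exp (-(π * lb * x))) := by
          simp only [add_sub_cancel_right]; congr 1; ext x; ring
      _ = (Qbar / Real.Gamma (1 + s) * K * (π * lb)) *
            ((1 / (π * lb)) ^ (s + 1) * Real.Gamma (s + 1)) := by
          rw [MeasureTheory.integral_const_mul,
            Real.integral_rpow_mul_exp_neg_mul_Ioi hs1 hb]
      _ = Qbar * K * (π * lb) ^ (-s) := by
          rw [Real.rpow_neg hb.le, one_div, Real.inv_rpow hb.le,
            Real.rpow_add hb, Real.rpow_one, add_comm 1 s]
          have hbs : (π * lb) ^ s ≠ 0 := (Real.rpow_pos_of_pos hb s).ne'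
          field_simp
  have heq : ∀ c : ℝ, 0 < c →
      Qbar * (π * c) ^ s * (π * lb) ^ (-s) = Qbar * (c / lb) ^ s := by
    intro c hc
    rw [Real.rpow_neg hb.le,
      show c / lb = (π * c) / (π * lb) by
        rw [mul_div_mul_left _ _ Real.pi_ne_zero],
      Real.div_rpow (by positivity) hb.le, div_eq_mul_inv, mul_assoc]
  by_cases hvn : 0 ≤ ν
  · simp only [if_pos hvn]
    have e := key ((π * lmin) ^ s)
    rw [e, heq lmin hmin]
    refine ⟨rfl, ?_⟩
    have : (lmin / lb) ^ s ≤ 1 :=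
      Real.rpow_le_one (by positivity) (div_le_one_of_le₀ h1 hlb.le)
        (by rw [hs]; positivity)
    nlinarith
  · simp only [if_neg hvn]
    have e := key ((π * lmax) ^ s)
    rw [e, heq lmax (lt_of_lt_of_le hmin (h1.trans h2))]
    refine ⟨rfl, ?_⟩
    have hs0 : s ≤ 0 := by
      rw [hs]; push_neg at hvn; nlinarith
    have : (lmax / lb) ^ s ≤ 1 :=
      Real.rpow_le_one_of_one_le_of_nonpos
        ((one_le_div hlb).mpr h2) hs0
    nlinarith
end

section
/- Let α > 2, β > −2/α, P̄ > 0 and 0 < λ_min ≤ λ_b ≤ λ_max be real numbers, and let X be a random variable with probability density x ↦ π·λ_b·e^{−π·λ_b·x} on (0,∞). Define P := (P̄/Γ(1 + αβ/2)) · X^{αβ/2} · ((π·λ_min)^{αβ/2} if β ≥ 0, and (π·λ_max)^{αβ/2} if β < 0). Then E[P^{2/α}] ≤ P̄^{2/α}. -/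
open MeasureTheory Set Real

lemma stmt_17_aux (α β Pbar lb lam : ℝ) (hα : 2 < α) (hβ : -2 / α < β)
    (hP : 0 < Pbar) (hlb : 0 < lb) (hlam : 0 < lam) (hratio : (lam / lb) ^ β ≤ 1) :
    (∫ x in Ioi (0 : ℝ),
        ((Pbar / Real.Gamma (1 + α * β / 2)) * x ^ (α * β / 2) *
            (π * lam) ^ (α * β / 2)) ^ (2 / α) *
          (π * lb * Real.exp (-(π * lb * x))))
      ≤ Pbar ^ (2 / α) := by
  have hα0 : (0:ℝ) < α := by linarith
  have hg : 0 < 1 + α * β / 2 := by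
    have h := (div_lt_iff₀ hα0).mp hβ
    nlinarith
  have hΓg : 0 < Real.Gamma (1 + α * β / 2) := Real.Gamma_pos_of_pos hg
  have ht : (0:ℝ) < 2 / α := by positivity
  have ht1 : 2 / α < 1 := by rw [div_lt_one hα0]; linarith
  have hβ1 : 0 < β + 1 := by
    have : -2 / α > -1 := by
      rw [gt_iff_lt, neg_lt, ← neg_div, neg_neg, div_lt_one hα0]; linarith
    linarith
  have hπlb : 0 < π * lb := by positivity
  have hπlam : 0 < π * lam := by positivity
  set t := 2 / α with htdef
  set G := Real.Gamma (1 + α * β / 2) with hGdef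
  -- rewrite the integrand
  have hcongr : ∀ x ∈ Ioi (0:ℝ),
      ((Pbar / G) * x ^ (α * β / 2) * (π * lam) ^ (α * β / 2)) ^ t *
        (π * lb * Real.exp (-(π * lb * x)))
      = ((Pbar / G) ^ t * (π * lam) ^ β * (π * lb)) *
        (x ^ ((β + 1) - 1) * Real.exp (-(π * lb * x))) := by
    intro x hx
    have hx0 : 0 < x := hx
    have hexp : α * β / 2 * t = β := by
      rw [htdef]; field_simp
    have h1 : ((Pbar / G) * x ^ (α * β / 2) * (π * lam) ^ (α * β / 2)) ^ t
        = (Pbar / G) ^ t * (x ^ (α * β / 2)) ^ t * ((π * lam) ^ (α * β / 2)) ^ t := by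
      rw [Real.mul_rpow (by positivity) (by positivity),
        Real.mul_rpow (by positivity) (by positivity)]
    have h2 : (x ^ (α * β / 2)) ^ t = x ^ β := by
      rw [← Real.rpow_mul hx0.le, hexp]
    have h3 : ((π * lam) ^ (α * β / 2)) ^ t = (π * lam) ^ β := by
      rw [← Real.rpow_mul hπlam.le, hexp]
    rw [h1, h2, h3]
    ring_nf
  rw [setIntegral_congr_fun measurableSet_Ioi hcongr, integral_const_mul,
    Real.integral_rpow_mul_exp_neg_mul_Ioi hβ1 hπlb]
  -- now pure inequality
  have hGamineq : Real.Gamma (β + 1) ≤ G ^ t := by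
    have hconv := Real.convexOn_log_Gamma.2 (mem_Ioi.2 one_pos) (mem_Ioi.2 hg)
      (show (0:ℝ) ≤ 1 - t by linarith) ht.le (show (1 - t) + t = 1 by ring)
    have hcomb : (1 - t) • (1:ℝ) + t • (1 + α * β / 2) = β + 1 := by
      simp only [smul_eq_mul, htdef]
      field_simp
      ring
    rw [hcomb] at hconv
    simp only [Function.comp_apply, smul_eq_mul, Real.Gamma_one, Real.log_one,
      mul_zero, zero_add] at hconv
    have hΓβ : 0 < Real.Gamma (β + 1) := Real.Gamma_pos_of_pos hβ1
    calc Real.Gamma (β + 1) = Real.exp (Real.log (Real.Gamma (β + 1))) :=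
          (Real.exp_log hΓβ).symm
      _ ≤ Real.exp (t * Real.log G) := Real.exp_le_exp.2 hconv
      _ = G ^ t := by rw [Real.rpow_def_of_pos hΓg, mul_comm]
  -- simplify LHS
  have hGt : 0 < G ^ t := Real.rpow_pos_of_pos hΓg t
  have hlbβ : 0 < (π * lb) ^ β := Real.rpow_pos_of_pos hπlb β
  have hsimp : (Pbar / G) ^ t * (π * lam) ^ β * (π * lb) *
      ((1 / (π * lb)) ^ (β + 1) * Real.Gamma (β + 1))
      = Pbar ^ t * (Real.Gamma (β + 1) / G ^ t) * (lam / lb) ^ β := by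
    have e1 : (Pbar / G) ^ t = Pbar ^ t / G ^ t := Real.div_rpow hP.le hΓg.le t
    have e2 : (1 / (π * lb)) ^ (β + 1) = ((π * lb) ^ β * (π * lb))⁻¹ := by
      rw [one_div, Real.inv_rpow hπlb.le, Real.rpow_add hπlb, Real.rpow_one]
    have e3 : (lam / lb) ^ β = (π * lam) ^ β / (π * lb) ^ β := by
      rw [← Real.div_rpow hπlam.le hπlb.le, mul_div_mul_left lam lb Real.pi_ne_zero]
    rw [e1, e2, e3]
    field_simp
  rw [hsimp]
  calc Pbar ^ t * (Real.Gamma (β + 1) / G ^ t) * (lam / lb) ^ β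
      ≤ Pbar ^ t * 1 * 1 := by
        gcongr
        exact (div_le_one hGt).2 hGamineq
    _ = Pbar ^ t := by ring

/-- Remark 4: with `X` exponentially distributed with rate `π λ_b` (formalized through its
density `x ↦ π λ_b e^{−π λ_b x}` on `(0,∞)`) and downlink power
`P = (P̄/Γ(1+αβ/2)) X^{αβ/2} ((π λ_min)^{αβ/2}` if `β ≥ 0`, `(π λ_max)^{αβ/2}` if `β < 0)`,
the fractional moment satisfies `E[P^{2/α}] ≤ P̄^{2/α}`. -/
theorem stmt_17 (α β Pbar lmin lb lmax : ℝ) (hα : 2 < α) (hβ : -2 / α < β)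
    (hP : 0 < Pbar) (hmin : 0 < lmin) (h1 : lmin ≤ lb) (h2 : lb ≤ lmax) :
    (∫ x in Ioi (0 : ℝ),
        ((Pbar / Real.Gamma (1 + α * β / 2)) * x ^ (α * β / 2) *
            (if 0 ≤ β then (π * lmin) ^ (α * β / 2) else (π * lmax) ^ (α * β / 2))) ^ (2 / α) *
          (π * lb * Real.exp (-(π * lb * x))))
      ≤ Pbar ^ (2 / α) := by
  have hlb : 0 < lb := lt_of_lt_of_le hmin h1
  rcases le_or_gt 0 β with hb | hb
  · simp only [if_pos hb]
    exact stmt_17_aux α β Pbar lb lmin hα hβ hP hlb hmin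
      (Real.rpow_le_one (by positivity) (div_le_one hlb |>.2 h1) hb)
  · simp only [if_neg (not_le.2 hb)]
    exact stmt_17_aux α β Pbar lb lmax hα hβ hP hlb (lt_of_lt_of_le hlb h2)
      (Real.rpow_le_one_of_one_le_of_nonpos ((one_le_div hlb).2 h2) hb.le)
end
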